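/- Let G₁ and G₂ be finite clique-Helly simple graphs, each having at least two vertices and no isolated vertices, and let G = G₁ □ G₂. Then for every clique Q of the clique graph K(G) (a maximal family of pairwise intersecting cliques of G), the total intersection ⋂_{x ∈ Q} x is a singleton: there is exactly one vertex of G belonging to every clique in Q. -/

import Mathlib

open SimpleGraph

universe u v

/-- A clique (maximal complete subgraph) of `G`, viewed as a vertex set. -/
def IsMaxClique {V : Type u} (G : SimpleGraph V) (s : Set V) : Prop :=
  G.IsClique s ∧ ∀ t : Set V, G.IsClique t → s ⊆ t → s = t

/-- The set of all cliques (maximal complete subgraphs) of `G`. -/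
def maxCliques {V : Type u} (G : SimpleGraph V) : Set (Set V) :=
  {s | IsMaxClique G s}

/-- The clique graph `K(G)`: vertices are the cliques of `G`, two distinct cliques
being adjacent iff they intersect. -/
def cliqueGraph {V : Type u} (G : SimpleGraph V) : SimpleGraph ↥(maxCliques G) where
  Adj Q R := Q ≠ R ∧ ((Q : Set V) ∩ (R : Set V)).Nonempty
  symm := by
    constructor
    intro Q R h
    refine ⟨h.1.symm, ?_⟩
    rw [Set.inter_comm]
    exact h.2
  loopless := ⟨fun Q h => h.1 rfl⟩

/-- A graph is complete iff any two distinct vertices are adjacent. -/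
def IsCompleteGraph {V : Type u} (G : SimpleGraph V) : Prop :=
  ∀ x y : V, x ≠ y → G.Adj x y

/-- The join `G₁ + G₂` of two graphs on disjoint vertex sets: all edges of `G₁`
and of `G₂`, plus all edges between the two vertex sets. -/
def joinGraph {V₁ : Type u} {V₂ : Type v} (G₁ : SimpleGraph V₁) (G₂ : SimpleGraph V₂) :
    SimpleGraph (V₁ ⊕ V₂) where
  Adj x y :=
    match x, y with
    | Sum.inl a, Sum.inl b => G₁.Adj a b
    | Sum.inr a, Sum.inr b => G₂.Adj a b
    | Sum.inl _, Sum.inr _ => True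
    | Sum.inr _, Sum.inl _ => True
  symm := by constructor; rintro (a | a) (b | b) h <;> first | exact h.symm | trivial
  loopless := by constructor; rintro (a | a) h <;> exact (SimpleGraph.irrefl _) h

/-- A finite simple graph bundled with its vertex type. -/
structure BGraph : Type (u + 1) where
  V : Type u
  [finV : Finite V]
  graph : SimpleGraph V

attribute [instance] BGraph.finV

/-- Bundle a finite simple graph. -/
def BGraph.of {V : Type u} [Finite V] (G : SimpleGraph V) : BGraph.{u} :=
  { V := V, graph := G }

/-- The bundled clique graph operator `K`; iterated clique graphs are `KB^[n]`. -/
def KB : BGraph.{u} → BGraph.{u} :=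
  fun H => { V := ↥(maxCliques H.graph), graph := cliqueGraph H.graph }

/-- A graph is `K`-convergent if its sequence of iterated clique graphs is finite
up to isomorphism, i.e. two of its iterated clique graphs are isomorphic. -/
def KConvergent (H : BGraph.{u}) : Prop :=
  ∃ m n : ℕ, m < n ∧ Nonempty ((KB^[n] H).graph ≃g (KB^[m] H).graph)

/-- A graph is `K`-periodic if `Kⁿ(G) ≅ G` for some `n > 0`. -/
def KPeriodic (H : BGraph.{u}) : Prop :=
  ∃ n : ℕ, 0 < n ∧ Nonempty ((KB^[n] H).graph ≃g H.graph)

/-- A graph is clique-Helly if every nonempty family of pairwise intersecting cliques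
has nonempty total intersection. -/
def CliqueHelly {V : Type u} (G : SimpleGraph V) : Prop :=
  ∀ F : Set (Set V), F.Nonempty → (∀ s ∈ F, s ∈ maxCliques G) →
    (∀ s ∈ F, ∀ t ∈ F, (s ∩ t).Nonempty) → (⋂ s ∈ F, s).Nonempty

/-! Every clique of `G₁ □ G₂` lies in a fibre `V₁ × {b}` or `{a} × V₂`, so it is the product of
its two projections, and each projection of a clique of `G₁ □ G₂` is a clique of the factor or a
single vertex. Projecting a pairwise intersecting family of cliques therefore gives, in each
factor, a pairwise intersecting family of cliques and singletons, which has a common vertex by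
the Helly property; hence `G₁ □ G₂` is clique-Helly and the members of `Q` share a vertex `v`.
A clique of `K(G)` contains every clique of `G` through a vertex common to all its members, and
without isolated vertices, for any two distinct vertices of `G₁ □ G₂` some clique contains the
first but not the second; so `v` is the only common vertex. -/

section MaxClique

variable {V : Type*} {G : SimpleGraph V} {s : Set V}

lemma isMaxClique_iff_maximal : IsMaxClique G s ↔ Maximal G.IsClique s :=
  ⟨fun h => ⟨h.1, fun t ht hst => (h.2 t ht hst).ge⟩,
    fun h => ⟨h.1, fun _ ht hst => hst.antisymm (h.2 ht hst)⟩⟩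

lemma exists_isMaxClique_superset [Finite V] (hs : G.IsClique s) :
    ∃ t, IsMaxClique G t ∧ s ⊆ t := by
  obtain ⟨t, hst, ht⟩ := Finite.exists_le_maximal hs
  exact ⟨t, isMaxClique_iff_maximal.2 ht, hst⟩

lemma IsMaxClique.nonempty [Nonempty V] (hs : IsMaxClique G s) : s.Nonempty := by
  obtain ⟨v⟩ := ‹Nonempty V›
  rw [Set.nonempty_iff_ne_empty]
  rintro rfl
  exact Set.singleton_ne_empty v (hs.2 {v} (isClique_singleton v) (Set.empty_subset _)).symm

lemma IsMaxClique.isClique (hs : IsMaxClique G s) : G.IsClique s :=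
  hs.1

instance [Finite V] : Nonempty (maxCliques G) :=
  let ⟨s, hs, _⟩ := exists_isMaxClique_superset (G := G) isClique_empty
  ⟨⟨s, hs⟩⟩

lemma SimpleGraph.IsClique.inter_nonempty_of_cliqueGraph [Nonempty V] {Q : Set (maxCliques G)}
    (hQ : (cliqueGraph G).IsClique Q) {x y : maxCliques G} (hx : x ∈ Q) (hy : y ∈ Q) :
    ((x : Set V) ∩ y).Nonempty := by
  rcases eq_or_ne x y with rfl | hxy
  · rw [Set.inter_self]
    exact IsMaxClique.nonempty x.2
  · exact (hQ hx hy hxy).2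

lemma IsMaxClique.mem_of_forall_inter_nonempty {Q : Set (maxCliques G)}
    (hQ : IsMaxClique (cliqueGraph G) Q) {R : maxCliques G}
    (hR : ∀ x ∈ Q, ((R : Set V) ∩ x).Nonempty) : R ∈ Q := by
  have hclique : (cliqueGraph G).IsClique (insert R Q) :=
    isClique_insert.2 ⟨hQ.1, fun x hx hne => ⟨hne, hR x hx⟩⟩
  rw [hQ.2 _ hclique (Set.subset_insert R Q)]
  exact Set.mem_insert R Q

lemma CliqueHelly.iInter_nonempty_of_isMaxClique_or_singleton (hG : CliqueHelly G)
    {F : Set (Set V)} (hF : F.Nonempty) (hmax : ∀ s ∈ F, IsMaxClique G s ∨ ∃ a, s = {a})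
    (hpair : ∀ s ∈ F, ∀ t ∈ F, (s ∩ t).Nonempty) : (⋂ s ∈ F, s).Nonempty := by
  by_cases hsingle : ∃ a, {a} ∈ F
  · obtain ⟨a, ha⟩ := hsingle
    refine ⟨a, Set.mem_iInter₂.2 fun s hs => ?_⟩
    obtain ⟨b, hbs, rfl⟩ := hpair s hs {a} ha
    exact hbs
  · refine hG F hF (fun s hs => (hmax s hs).resolve_right ?_) hpair
    rintro ⟨a, rfl⟩
    exact hsingle ⟨a, hs⟩

end MaxClique

section BoxProd

variable {V₁ V₂ : Type*} {G₁ : SimpleGraph V₁} {G₂ : SimpleGraph V₂} {s : Set (V₁ × V₂)}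

lemma SimpleGraph.IsClique.boxProd_fst_eq_or_snd_eq (hs : (G₁ □ G₂).IsClique s)
    {x y : V₁ × V₂} (hx : x ∈ s) (hy : y ∈ s) : x.1 = y.1 ∨ x.2 = y.2 := by
  rcases eq_or_ne x y with rfl | hxy
  · exact Or.inl rfl
  · rcases boxProd_adj.1 (hs hx hy hxy) with ⟨-, h⟩ | ⟨-, h⟩
    exacts [Or.inr h, Or.inl h]

lemma SimpleGraph.IsClique.boxProd_forall_fst_eq_or_forall_snd_eq
    (hs : (G₁ □ G₂).IsClique s) {x : V₁ × V₂} (hx : x ∈ s) :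
    (∀ z ∈ s, z.1 = x.1) ∨ (∀ z ∈ s, z.2 = x.2) := by
  by_contra! h
  obtain ⟨⟨y, hy, hy₁⟩, z, hz, hz₂⟩ := h
  have := hs.boxProd_fst_eq_or_snd_eq hy hx
  have := hs.boxProd_fst_eq_or_snd_eq hz hx
  have := hs.boxProd_fst_eq_or_snd_eq hy hz
  grind

lemma SimpleGraph.IsClique.boxProd_eq_image_fst_prod_image_snd (hs : (G₁ □ G₂).IsClique s) :
    s = (Prod.fst '' s) ×ˢ (Prod.snd '' s) := by
  refine Set.subset_fst_image_prod_snd_image.antisymm ?_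
  rintro ⟨_, _⟩ ⟨⟨p, hp, rfl⟩, q, hq, rfl⟩
  rcases hs.boxProd_forall_fst_eq_or_forall_snd_eq hp with h | h
  · simpa [← h q hq] using hq
  · simpa [h q hq] using hp

lemma SimpleGraph.IsClique.boxProd_prod_singleton {C : Set V₁} (hC : G₁.IsClique C) (b : V₂) :
    (G₁ □ G₂).IsClique (C ×ˢ {b}) := by
  rintro ⟨a, _⟩ ⟨ha, rfl⟩ ⟨a', _⟩ ⟨ha', rfl⟩ hne
  exact boxProd_adj_left.2 (hC ha ha' fun h => hne (h ▸ rfl))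

lemma SimpleGraph.IsClique.boxProd_singleton_prod {D : Set V₂} (hD : G₂.IsClique D) (a : V₁) :
    (G₁ □ G₂).IsClique ({a} ×ˢ D) := by
  rintro ⟨_, b⟩ ⟨rfl, hb⟩ ⟨_, b'⟩ ⟨rfl, hb'⟩ hne
  exact boxProd_adj_right.2 (hD hb hb' fun h => hne (h ▸ rfl))

lemma IsMaxClique.image_fst_boxProd (hs : IsMaxClique (G₁ □ G₂) s) (hne : s.Nonempty) :
    IsMaxClique G₁ (Prod.fst '' s) ∨ ∃ a, Prod.fst '' s = {a} := by
  obtain ⟨x, hx⟩ := hne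
  rcases hs.isClique.boxProd_forall_fst_eq_or_forall_snd_eq hx with h | h
  · exact Or.inr ⟨x.1, (Set.image_congr h).trans (Set.Nonempty.image_const ⟨x, hx⟩ _)⟩
  have hsnd : Prod.snd '' s = {x.2} :=
    (Set.image_congr h).trans (Set.Nonempty.image_const ⟨x, hx⟩ _)
  refine Or.inl ⟨?_, fun C hC hsub => ?_⟩
  · rintro _ ⟨p, hp, rfl⟩ _ ⟨q, hq, rfl⟩ hpq
    exact ((boxProd_adj.1 (hs.isClique hp hq (ne_of_apply_ne _ hpq))).resolve_right
      fun h => hpq h.2).1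
  · have hsC : s ⊆ C ×ˢ {x.2} := by
      rw [hs.isClique.boxProd_eq_image_fst_prod_image_snd, hsnd]
      exact Set.prod_mono hsub le_rfl
    rw [hs.2 _ (hC.boxProd_prod_singleton x.2) hsC,
      Set.fst_image_prod _ (Set.singleton_nonempty _)]

lemma IsMaxClique.image_snd_boxProd (hs : IsMaxClique (G₁ □ G₂) s) (hne : s.Nonempty) :
    IsMaxClique G₂ (Prod.snd '' s) ∨ ∃ b, Prod.snd '' s = {b} := by
  obtain ⟨x, hx⟩ := hne
  rcases hs.isClique.boxProd_forall_fst_eq_or_forall_snd_eq hx with h | h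
  swap
  · exact Or.inr ⟨x.2, (Set.image_congr h).trans (Set.Nonempty.image_const ⟨x, hx⟩ _)⟩
  have hfst : Prod.fst '' s = {x.1} :=
    (Set.image_congr h).trans (Set.Nonempty.image_const ⟨x, hx⟩ _)
  refine Or.inl ⟨?_, fun D hD hsub => ?_⟩
  · rintro _ ⟨p, hp, rfl⟩ _ ⟨q, hq, rfl⟩ hpq
    exact ((boxProd_adj.1 (hs.isClique hp hq (ne_of_apply_ne _ hpq))).resolve_left
      fun h => hpq h.2).1
  · have hsD : s ⊆ {x.1} ×ˢ D := by
      rw [hs.isClique.boxProd_eq_image_fst_prod_image_snd, hfst]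
      exact Set.prod_mono le_rfl hsub
    rw [hs.2 _ (hD.boxProd_singleton_prod x.1) hsD,
      Set.snd_image_prod (Set.singleton_nonempty _)]

theorem CliqueHelly.boxProd (h₁ : CliqueHelly G₁) (h₂ : CliqueHelly G₂) :
    CliqueHelly (G₁ □ G₂) := by
  intro F hF hmax hpair
  have hne : ∀ s ∈ F, s.Nonempty := fun s hs => by simpa using hpair s hs s hs
  obtain ⟨a, ha⟩ := h₁.iInter_nonempty_of_isMaxClique_or_singleton (hF.image (Prod.fst '' ·))
    (by rintro _ ⟨s, hs, rfl⟩; exact (hmax s hs).image_fst_boxProd (hne s hs))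
    (by rintro _ ⟨s, hs, rfl⟩ _ ⟨t, ht, rfl⟩
        exact ((hpair s hs t ht).image _).mono (Set.image_inter_subset _ _ _))
  obtain ⟨b, hb⟩ := h₂.iInter_nonempty_of_isMaxClique_or_singleton (hF.image (Prod.snd '' ·))
    (by rintro _ ⟨s, hs, rfl⟩; exact (hmax s hs).image_snd_boxProd (hne s hs))
    (by rintro _ ⟨s, hs, rfl⟩ _ ⟨t, ht, rfl⟩
        exact ((hpair s hs t ht).image _).mono (Set.image_inter_subset _ _ _))
  refine ⟨(a, b), Set.mem_iInter₂.2 fun s hs => ?_⟩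
  rw [(hmax s hs).isClique.boxProd_eq_image_fst_prod_image_snd]
  exact ⟨Set.mem_iInter₂.1 ha _ ⟨s, hs, rfl⟩, Set.mem_iInter₂.1 hb _ ⟨s, hs, rfl⟩⟩

lemma exists_isMaxClique_boxProd_forall_snd_eq [Finite V₁] [Finite V₂]
    (h₁ : ∀ a, ∃ a', G₁.Adj a a') (w : V₁ × V₂) :
    ∃ R, IsMaxClique (G₁ □ G₂) R ∧ w ∈ R ∧ ∀ z ∈ R, z.2 = w.2 := by
  obtain ⟨a, ha⟩ := h₁ w.1
  obtain ⟨R, hR, hwR⟩ := exists_isMaxClique_superset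
    (isClique_pair.2 fun _ => boxProd_adj.2 (Or.inl ⟨ha, rfl⟩) : (G₁ □ G₂).IsClique {w, (a, w.2)})
  have hw : w ∈ R := hwR (Set.mem_insert _ _)
  exact ⟨R, hR, hw, (hR.isClique.boxProd_forall_fst_eq_or_forall_snd_eq hw).resolve_left
    fun h => ha.ne' (h _ (hwR (Set.mem_insert_of_mem _ rfl)))⟩

lemma exists_isMaxClique_boxProd_forall_fst_eq [Finite V₁] [Finite V₂]
    (h₂ : ∀ b, ∃ b', G₂.Adj b b') (w : V₁ × V₂) :
    ∃ R, IsMaxClique (G₁ □ G₂) R ∧ w ∈ R ∧ ∀ z ∈ R, z.1 = w.1 := by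
  obtain ⟨b, hb⟩ := h₂ w.2
  obtain ⟨R, hR, hwR⟩ := exists_isMaxClique_superset
    (isClique_pair.2 fun _ => boxProd_adj.2 (Or.inr ⟨hb, rfl⟩) : (G₁ □ G₂).IsClique {w, (w.1, b)})
  have hw : w ∈ R := hwR (Set.mem_insert _ _)
  exact ⟨R, hR, hw, (hR.isClique.boxProd_forall_fst_eq_or_forall_snd_eq hw).resolve_right
    fun h => hb.ne' (h _ (hwR (Set.mem_insert_of_mem _ rfl)))⟩

lemma exists_isMaxClique_boxProd_mem_not_mem [Finite V₁] [Finite V₂]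
    (h₁ : ∀ a, ∃ a', G₁.Adj a a') (h₂ : ∀ b, ∃ b', G₂.Adj b b') {v w : V₁ × V₂} (hvw : v ≠ w) :
    ∃ R, IsMaxClique (G₁ □ G₂) R ∧ v ∈ R ∧ w ∉ R := by
  by_cases hfst : v.1 = w.1
  · obtain ⟨R, hR, hvR, hsnd⟩ := exists_isMaxClique_boxProd_forall_snd_eq h₁ v
    exact ⟨R, hR, hvR, fun hwR => hvw (Prod.ext hfst (hsnd w hwR).symm)⟩
  · obtain ⟨R, hR, hvR, hfst'⟩ := exists_isMaxClique_boxProd_forall_fst_eq h₂ v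
    exact ⟨R, hR, hvR, fun hwR => hfst (hfst' w hwR).symm⟩

end BoxProd

/-- Let `G = G₁ □ G₂` where `G₁`, `G₂` are finite clique-Helly graphs, each with at least
two vertices and no isolated vertices. Then for every clique `Q` of the clique graph `K(G)`,
there is exactly one vertex of `G` belonging to every clique in `Q`, i.e. the total
intersection of the members of `Q` is a singleton. -/
theorem maxClique_cliqueGraph_boxProd_inter_singleton {V₁ V₂ : Type u} [Finite V₁] [Finite V₂]
    [Nontrivial V₁] [Nontrivial V₂] (G₁ : SimpleGraph V₁) (G₂ : SimpleGraph V₂)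
    (hH₁ : CliqueHelly G₁) (hH₂ : CliqueHelly G₂)
    (hiso₁ : ∀ v : V₁, ∃ u : V₁, G₁.Adj v u) (hiso₂ : ∀ v : V₂, ∃ u : V₂, G₂.Adj v u)
    (Q : Set ↥(maxCliques (G₁ □ G₂))) (hQ : Q ∈ maxCliques (cliqueGraph (G₁ □ G₂))) :
    ∃ v : V₁ × V₂, (⋂ x ∈ Q, (x : Set (V₁ × V₂))) = {v} := by
  obtain ⟨v, hv⟩ := hH₁.boxProd hH₂ (Subtype.val '' Q) ((IsMaxClique.nonempty hQ).image _)
    (by rintro _ ⟨x, -, rfl⟩; exact x.2)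
    (by rintro _ ⟨x, hx, rfl⟩ _ ⟨y, hy, rfl⟩
        exact (IsMaxClique.isClique hQ).inter_nonempty_of_cliqueGraph hx hy)
  rw [Set.biInter_image] at hv
  refine ⟨v, Set.eq_singleton_iff_unique_mem.2 ⟨hv, fun w hw => ?_⟩⟩
  by_contra hwv
  obtain ⟨R, hR, hwR, hvR⟩ := exists_isMaxClique_boxProd_mem_not_mem hiso₁ hiso₂ hwv
  have hRQ : (⟨R, hR⟩ : maxCliques (G₁ □ G₂)) ∈ Q :=
    IsMaxClique.mem_of_forall_inter_nonempty hQ fun x hx => ⟨w, hwR, Set.mem_iInter₂.1 hw x hx⟩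
  exact hvR (Set.mem_iInter₂.1 hv _ hRQ)
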